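/- arXiv:0812.1102 — 3 statements merged into one kernel-verified Lean document; each statement's English description precedes it below -/
import Mathlib

section
/- If a biquaternion q is idempotent (q² = q) and q is neither 0 nor 1, then q = 1/2 + (1/2) I ξ for some biquaternion ξ with ξ² = −1; equivalently, every idempotent biquaternion is of the form 1/2 + (I/2)ξ with ξ² = −1, or is 0 or 1. -/
/-! An idempotent `q` gives the involution `2q - 1`, whose square is `1`; multiplying it by `-I`
turns it into a square root `ξ` of `-1`, and `q = 1/2 + (1/2)(2q - 1) = 1/2 + (I/2) ξ`. -/

theorem IsIdempotentElem.two_mul_sub_one_sq {R : Type*} [Ring R] {q : R}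
    (hq : IsIdempotentElem q) : (2 * q - 1) ^ 2 = 1 := by
  noncomm_ring [hq.eq]

theorem IsIdempotentElem.exists_sq_eq_neg_one {A : Type*} [Ring A] [Algebra ℂ A] {q : A}
    (hq : IsIdempotentElem q) :
    ∃ ξ : A, ξ ^ 2 = -1 ∧ q = algebraMap ℂ A 2⁻¹ + (2⁻¹ * Complex.I) • ξ := by
  refine ⟨(-Complex.I) • (2 * q - 1), ?_, ?_⟩
  · rw [smul_pow, hq.two_mul_sub_one_sq, neg_sq, Complex.I_sq, neg_one_smul]
  · have hI : 2⁻¹ * Complex.I * -Complex.I = 2⁻¹ := by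
      rw [mul_neg, mul_assoc, Complex.I_mul_I]; ring
    rw [smul_smul, hI, Algebra.algebraMap_eq_smul_one, two_mul]
    module

theorem stmt5 (q : Quaternion ℂ) (hq : q ^ 2 = q) :
    q = 0 ∨ q = 1 ∨
      ∃ ξ : Quaternion ℂ, ξ ^ 2 = -1 ∧
        q = ((2⁻¹ : ℂ) : Quaternion ℂ) + (2⁻¹ * Complex.I) • ξ := by
  have hidem : IsIdempotentElem q := by rw [IsIdempotentElem, ← sq, hq]
  simpa only [Quaternion.algebraMap_def] using Or.inr (Or.inr hidem.exists_sq_eq_neg_one)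
end

section
/- If q is a nonzero nilpotent biquaternion (q² = 0), writing q = q_r + I q_i with q_r, q_i real quaternions, then q_r ≠ 0 and p = q / ‖q_r‖ (scalar division by the real norm of q_r) has the form μ + I ν where μ, ν are perpendicular real unit pure quaternions. -/
def biRe (q : Quaternion ℂ) : Quaternion ℝ := ⟨q.re.re, q.imI.re, q.imJ.re, q.imK.re⟩
def biIm (q : Quaternion ℂ) : Quaternion ℝ := ⟨q.re.im, q.imI.im, q.imJ.im, q.imK.im⟩
def qInner (p q : Quaternion ℝ) : ℝ :=
  p.re * q.re + p.imI * q.imI + p.imJ * q.imJ + p.imK * q.imK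

/-- The embedding of real quaternions into the biquaternions. -/
def toBi (q : Quaternion ℝ) : Quaternion ℂ :=
  ⟨(q.re : ℂ), (q.imI : ℂ), (q.imJ : ℂ), (q.imK : ℂ)⟩

/-!
Since `normSq` is multiplicative, `q ^ 2 = 0` forces `normSq q = 0`, hence
`q * (q + star q) = q ^ 2 + normSq q = 0`; as `q + star q = 2 * q.re` and `q ≠ 0`, `q` is pure.
Writing `q = a + I b`, the complex number `normSq q` is `‖a‖² - ‖b‖² + 2 I ⟪a, b⟫`, so
`‖a‖ = ‖b‖` and `⟪a, b⟫ = 0`; then `a = 0` would give `q = 0`, and `μ = a / ‖a‖`, `ν = b / ‖a‖`.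
-/

namespace Quaternion

variable {R : Type*} [CommRing R]

theorem normSq_eq_zero_of_sq_eq_zero [NoZeroDivisors R] {q : ℍ[R]} (hq : q ^ 2 = 0) :
    normSq q = 0 :=
  (pow_eq_zero_iff two_ne_zero).mp <| by rw [← map_pow, hq, map_zero]

theorem re_eq_zero_of_sq_eq_zero [IsDomain R] [CharZero R] {q : ℍ[R]} (hq : q ^ 2 = 0)
    (h0 : q ≠ 0) : q.re = 0 := by
  have h : (2 * q.re) • q = 0 := by
    rw [← mul_coe_eq_smul, ← self_add_star', mul_add, ← sq, hq, self_mul_star,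
      normSq_eq_zero_of_sq_eq_zero hq, coe_zero, zero_add]
  simpa [h0] using h

end Quaternion

open Quaternion

theorem toBi_zero : toBi 0 = 0 := by
  ext <;> simp [toBi]

theorem toBi_biRe_add_I_smul_toBi_biIm (q : ℍ[ℂ]) :
    toBi (biRe q) + Complex.I • toBi (biIm q) = q := by
  ext <;> simp only [re_add, imI_add, imJ_add, imK_add, re_smul, imI_smul, imJ_smul, imK_smul] <;>
    simp [toBi, biRe, biIm, Complex.ext_iff]

theorem ofReal_smul_toBi_add_I_smul_toBi (c : ℝ) (a b : ℍ[ℝ]) :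
    (c : ℂ) • (toBi a + Complex.I • toBi b) = toBi (c • a) + Complex.I • toBi (c • b) := by
  ext <;> simp only [re_add, imI_add, imJ_add, imK_add, re_smul, imI_smul, imJ_smul, imK_smul] <;>
    simp [toBi] <;> ring

theorem qInner_smul_smul (c : ℝ) (a b : ℍ[ℝ]) : qInner (c • a) (c • b) = c ^ 2 * qInner a b := by
  simp only [qInner, re_smul, imI_smul, imJ_smul, imK_smul, smul_eq_mul]
  ring

theorem normSq_eq_biRe_biIm (q : ℍ[ℂ]) :
    normSq q = (normSq (biRe q) - normSq (biIm q) : ℝ) +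
      (2 * qInner (biRe q) (biIm q) : ℝ) * Complex.I := by
  rw [normSq_def', normSq_def', normSq_def']
  apply Complex.ext <;> simp [biRe, biIm, qInner, sq] <;> ring

theorem normSq_eq_zero_iff_biRe_biIm {q : ℍ[ℂ]} :
    normSq q = 0 ↔ normSq (biRe q) = normSq (biIm q) ∧ qInner (biRe q) (biIm q) = 0 := by
  rw [normSq_eq_biRe_biIm, Complex.ext_iff]
  simp [sub_eq_zero]

theorem biRe_ne_zero_of_normSq_eq_zero {q : ℍ[ℂ]} (hN : normSq q = 0) (h0 : q ≠ 0) :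
    biRe q ≠ 0 := by
  intro hRe
  have hIm : biIm q = 0 := by
    rw [← normSq_eq_zero, ← (normSq_eq_zero_iff_biRe_biIm.mp hN).1, hRe, map_zero]
  apply h0
  rw [← toBi_biRe_add_I_smul_toBi_biIm q, hRe, hIm, toBi_zero, smul_zero, add_zero]

theorem stmt17 (q : Quaternion ℂ) (hq : q ^ 2 = 0) (h0 : q ≠ 0) :
    biRe q ≠ 0 ∧
    ∃ μ ν : Quaternion ℝ, μ.re = 0 ∧ ν.re = 0 ∧ ‖μ‖ = 1 ∧ ‖ν‖ = 1 ∧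
      qInner μ ν = 0 ∧
      ((‖biRe q‖ : ℂ))⁻¹ • q = toBi μ + Complex.I • toBi ν := by
  have hre : q.re = 0 := re_eq_zero_of_sq_eq_zero hq h0
  have hN : normSq q = 0 := normSq_eq_zero_of_sq_eq_zero hq
  obtain ⟨hnormSq, hinner⟩ := normSq_eq_zero_iff_biRe_biIm.mp hN
  have hRe : biRe q ≠ 0 := biRe_ne_zero_of_normSq_eq_zero hN h0
  have hnorm : ‖biRe q‖ ≠ 0 := norm_ne_zero_iff.mpr hRe
  have hnormIm : ‖biIm q‖ = ‖biRe q‖ := by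
    rw [normSq_eq_norm_mul_self, normSq_eq_norm_mul_self] at hnormSq
    exact (mul_self_inj (norm_nonneg _) (norm_nonneg _)).mp hnormSq.symm
  refine ⟨hRe, ‖biRe q‖⁻¹ • biRe q, ‖biRe q‖⁻¹ • biIm q, ?_, ?_, ?_, ?_, ?_, ?_⟩
  · rw [re_smul]; simp [biRe, hre]
  · rw [re_smul]; simp [biIm, hre]
  · rw [norm_smul, norm_inv, norm_norm, inv_mul_cancel₀ hnorm]
  · rw [norm_smul, norm_inv, norm_norm, hnormIm, inv_mul_cancel₀ hnorm]
  · rw [qInner_smul_smul, hinner, mul_zero]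
  · rw [← ofReal_smul_toBi_add_I_smul_toBi, toBi_biRe_add_I_smul_toBi_biIm, Complex.ofReal_inv]
end

section
/- If q is a nonzero pure biquaternion with vanishing semi-norm, written q = q_r + I q_i with real quaternion parts, then q_r and q_i are nonzero pure real quaternions with equal norms and zero inner product, and q_r/‖q_r‖ and q_i/‖q_i‖ are anticommuting square roots of −1 in the real quaternions. -/
/-!
Writing `q = a + I b` with `a = biRe q`, `b = biIm q`, the complex semi-norm of `q` is
`(|a|² - |b|²) + 2 I ⟨a, b⟩`, so its vanishing says exactly that `a` and `b` have equal norms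
and are orthogonal; neither can vanish since `q ≠ 0`. A pure real quaternion squares to minus
its squared norm, and two orthogonal pure ones anticommute.
-/

open Quaternion

theorem biRe_re (q : Quaternion ℂ) : (biRe q).re = q.re.re := rfl

theorem biIm_re (q : Quaternion ℂ) : (biIm q).re = q.re.im := rfl

theorem eq_zero_of_biRe_eq_zero_of_biIm_eq_zero {q : Quaternion ℂ} (hr : biRe q = 0)
    (hi : biIm q = 0) : q = 0 := by
  rw [Quaternion.ext_iff] at hr hi
  simp only [biRe, biIm, re_zero, imI_zero, imJ_zero, imK_zero] at hr hi
  ext <;> apply Complex.ext <;> simp [hr, hi]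

theorem normSq_eq_normSq_biRe_sub_normSq_biIm (q : Quaternion ℂ) :
    normSq q = ⟨normSq (biRe q) - normSq (biIm q), 2 * qInner (biRe q) (biIm q)⟩ := by
  rw [normSq_def', normSq_def', normSq_def']
  apply Complex.ext <;>
    simp only [biRe, biIm, qInner, pow_two, Complex.add_re, Complex.add_im,
      Complex.mul_re, Complex.mul_im] <;> ring

theorem normSq_eq_zero_iff_normSq_biRe_eq_normSq_biIm_and_qInner_eq_zero (q : Quaternion ℂ) :
    normSq q = 0 ↔ normSq (biRe q) = normSq (biIm q) ∧ qInner (biRe q) (biIm q) = 0 := by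
  rw [normSq_eq_normSq_biRe_sub_normSq_biIm, Complex.ext_iff, Complex.zero_re, Complex.zero_im,
    sub_eq_zero, mul_eq_zero, or_iff_right two_ne_zero]

theorem qInner_smul_smul_s18 (c d : ℝ) (p r : Quaternion ℝ) :
    qInner (c • p) (d • r) = c * d * qInner p r := by
  simp only [qInner, re_smul, imI_smul, imJ_smul, imK_smul, smul_eq_mul]; ring

theorem mul_add_mul_swap_of_re_eq_zero {p r : Quaternion ℝ} (hp : p.re = 0) (hr : r.re = 0) :
    p * r + r * p = -(2 * qInner p r : ℝ) := by
  ext <;>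
    simp only [qInner, re_add, imI_add, imJ_add, imK_add, re_mul, imI_mul, imJ_mul, imK_mul,
      re_neg, imI_neg, imJ_neg, imK_neg, re_coe, imI_coe, imJ_coe, imK_coe, hp, hr] <;> ring

theorem mul_eq_neg_mul_of_re_eq_zero_of_qInner_eq_zero {p r : Quaternion ℝ} (hp : p.re = 0)
    (hr : r.re = 0) (hpr : qInner p r = 0) : p * r = -(r * p) := by
  rw [eq_neg_iff_add_eq_zero, mul_add_mul_swap_of_re_eq_zero hp hr, hpr]; simp

theorem sq_normalize_of_re_eq_zero {p : Quaternion ℝ} (hp : p.re = 0) (h : p ≠ 0) :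
    (‖p‖⁻¹ • p) ^ 2 = -1 := by
  have hn : ‖p‖ ≠ 0 := norm_ne_zero_iff.mpr h
  rw [smul_pow, sq_eq_neg_normSq.mpr hp, normSq_eq_norm_mul_self, smul_neg, ← coe_smul,
    smul_eq_mul, inv_pow, sq, inv_mul_cancel₀ (mul_ne_zero hn hn), coe_one]

theorem norm_eq_norm_of_normSq_eq {p r : Quaternion ℝ} (h : normSq p = normSq r) :
    ‖p‖ = ‖r‖ := by
  rw [normSq_eq_norm_mul_self, normSq_eq_norm_mul_self] at h
  exact (mul_self_inj (norm_nonneg p) (norm_nonneg r)).mp h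

theorem stmt18 (q : Quaternion ℂ) (h0 : q ≠ 0) (hpure : q.re = 0)
    (hnorm : q.imI ^ 2 + q.imJ ^ 2 + q.imK ^ 2 = 0) :
    biRe q ≠ 0 ∧ biIm q ≠ 0 ∧ (biRe q).re = 0 ∧ (biIm q).re = 0 ∧
    ‖biRe q‖ = ‖biIm q‖ ∧ qInner (biRe q) (biIm q) = 0 ∧
    (‖biRe q‖⁻¹ • biRe q) ^ 2 = -1 ∧ (‖biIm q‖⁻¹ • biIm q) ^ 2 = -1 ∧
    (‖biRe q‖⁻¹ • biRe q) * (‖biIm q‖⁻¹ • biIm q) =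
      -((‖biIm q‖⁻¹ • biIm q) * (‖biRe q‖⁻¹ • biRe q)) := by
  have hsemi : normSq q = 0 := by rw [normSq_def']; linear_combination hnorm + q.re * hpure
  obtain ⟨hsq, hinner⟩ :=
    (normSq_eq_zero_iff_normSq_biRe_eq_normSq_biIm_and_qInner_eq_zero q).mp hsemi
  have hpureRe : (biRe q).re = 0 := by rw [biRe_re, hpure, Complex.zero_re]
  have hpureIm : (biIm q).re = 0 := by rw [biIm_re, hpure, Complex.zero_im]
  have hRe0 : biRe q ≠ 0 := fun h ↦ h0 <| eq_zero_of_biRe_eq_zero_of_biIm_eq_zero h <|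
    normSq_eq_zero.mp (by rw [← hsq, h, map_zero])
  have hIm0 : biIm q ≠ 0 := fun h ↦ h0 <| eq_zero_of_biRe_eq_zero_of_biIm_eq_zero
    (normSq_eq_zero.mp (by rw [hsq, h, map_zero])) h
  refine ⟨hRe0, hIm0, hpureRe, hpureIm, norm_eq_norm_of_normSq_eq hsq, hinner,
    sq_normalize_of_re_eq_zero hpureRe hRe0, sq_normalize_of_re_eq_zero hpureIm hIm0, ?_⟩
  apply mul_eq_neg_mul_of_re_eq_zero_of_qInner_eq_zero
  · rw [re_smul, hpureRe, smul_zero]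
  · rw [re_smul, hpureIm, smul_zero]
  · rw [qInner_smul_smul_s18, hinner, mul_zero]
end
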